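/- Let P = (P_1,...,P_m) and Q = (Q_1,...,Q_n) be projective measurements on a finite-dimensional complex Hilbert space H, and let ψ be a unit vector. Then H(P,ψ) + H(Q,ψ) ≥ -2 log₂ max_{i,j} ‖P_i Q_j‖, where ‖·‖ denotes the operator norm. -/

import Mathlib

/-!
Maassen–Uffink via Riesz–Thorin. The matrix `a i j = ⟪P i ψ, Q j ψ⟫` has marginals
`p i = ‖P i ψ‖²` and `q j = ‖Q j ψ‖²`, entries `|a i j| ≤ c √(p i q j)` with `c = max ‖P i Q j‖`,
and `|∑ λ i μ j a i j| ≤ 1` for unimodular `λ, μ`, since `∑ λ i P i` is unitary. The function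
`F z = ∑ a i j (p i q j / c²) ^ (z / 2)` satisfies `F 0 = 1` and `‖F‖ ≤ 1` on the lines `re z = 0`
and `re z = 1`, so by the three lines theorem `‖F t‖ ≤ 1` on `[0, 1]`. Hence `re F'(0) ≤ 0`,
which is the inequality `∑ p log p + ∑ q log q ≤ 2 log c`.
-/

open Finset Complex Set Filter Topology

section ProjectiveMeasurement

variable {𝕜 E ι κ : Type*} [RCLike 𝕜] [NormedAddCommGroup E] [InnerProductSpace 𝕜 E]
  [CompleteSpace E]

structure IsProjectiveMeasurement [Fintype ι] (P : ι → E →L[𝕜] E) : Prop where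
  isStarProjection : ∀ i, IsStarProjection (P i)
  sum_eq_one : ∑ i, P i = 1

local notation "⟪" x ", " y "⟫" => inner 𝕜 x y

namespace IsStarProjection

variable {T : E →L[𝕜] E}

theorem apply_apply (hT : IsStarProjection T) (x : E) : T (T x) = T x :=
  congr($(hT.isIdempotentElem) x)

theorem inner_apply_eq_inner_apply_apply (hT : IsStarProjection T) (x y : E) : ⟪T x, y⟫ = ⟪T x, T y⟫ := by
  calc ⟪T x, y⟫ = ⟪T (T x), y⟫ := by rw [hT.apply_apply]
    _ = ⟪T x, T y⟫ := hT.isSelfAdjoint.isSymmetric (T x) y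

theorem inner_apply_self (hT : IsStarProjection T) (x : E) : ⟪T x, x⟫ = (‖T x‖ ^ 2 : ℝ) := by
  rw [hT.inner_apply_eq_inner_apply_apply, inner_self_eq_norm_sq_to_K]; norm_cast

theorem inner_self_apply (hT : IsStarProjection T) (x : E) : ⟪x, T x⟫ = (‖T x‖ ^ 2 : ℝ) := by
  rw [← hT.inner_apply_self]
  exact (hT.isSelfAdjoint.isSymmetric x x).symm

theorem norm_inner_apply_le {S : E →L[𝕜] E} (hT : IsStarProjection T) (hS : IsIdempotentElem S)
    (x y : E) : ‖⟪T x, S y⟫‖ ≤ ‖T ∘L S‖ * (‖T x‖ * ‖S y‖) := by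
  have : ⟪T x, S y⟫ = ⟪T x, (T ∘L S) (S y)⟫ := by
    rw [hT.inner_apply_eq_inner_apply_apply, ContinuousLinearMap.comp_apply, ← mul_apply_eq_comp S, hS.eq]
  rw [this]
  calc ‖⟪T x, (T ∘L S) (S y)⟫‖ ≤ ‖T x‖ * (‖T ∘L S‖ * ‖S y‖) :=
        (norm_inner_le_norm _ _).trans (by gcongr; exact (T ∘L S).le_opNorm _)
    _ = _ := by ring

end IsStarProjection

namespace IsProjectiveMeasurement

variable [Fintype ι] {P : ι → E →L[𝕜] E}

theorem sum_apply (hP : IsProjectiveMeasurement P) (x : E) : ∑ i, P i x = x := by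
  rw [← _root_.sum_apply, hP.sum_eq_one, one_apply_eq_self]

theorem sum_norm_sq_apply (hP : IsProjectiveMeasurement P) (x : E) :
    ∑ i, ‖P i x‖ ^ 2 = ‖x‖ ^ 2 := by
  have : ((‖x‖ ^ 2 : ℝ) : 𝕜) = ((∑ i, ‖P i x‖ ^ 2 : ℝ) : 𝕜) := by
    rw [RCLike.ofReal_pow, ← inner_self_eq_norm_sq_to_K, RCLike.ofReal_sum]
    nth_rw 2 [← hP.sum_apply x]
    rw [inner_sum]
    exact sum_congr rfl fun i _ => (hP.isStarProjection i).inner_self_apply x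
  exact_mod_cast this.symm

theorem apply_apply_of_ne (hP : IsProjectiveMeasurement P) {i k : ι} (hik : i ≠ k) (x : E) :
    P i (P k x) = 0 := by
  classical
  have h := hP.sum_norm_sq_apply (P k x)
  rw [← add_sum_erase _ _ (mem_univ k), (hP.isStarProjection k).apply_apply, add_eq_left,
    sum_eq_zero_iff_of_nonneg fun _ _ => sq_nonneg _] at h
  simpa using h i (mem_erase.2 ⟨hik, mem_univ i⟩)

theorem apply_sum_smul_apply (hP : IsProjectiveMeasurement P) (c : ι → 𝕜) (k : ι) (x : E) :
    P k (∑ i, c i • P i x) = c k • P k x := by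
  classical
  rw [map_sum, sum_eq_single k]
  · rw [map_smul, (hP.isStarProjection k).apply_apply]
  · intro i _ hik
    rw [map_smul, hP.apply_apply_of_ne (Ne.symm hik), smul_zero]
  · simp

theorem norm_sum_smul_apply (hP : IsProjectiveMeasurement P) {c : ι → 𝕜} (hc : ∀ i, ‖c i‖ = 1)
    (x : E) : ‖∑ i, c i • P i x‖ = ‖x‖ := by
  rw [← sq_eq_sq₀ (norm_nonneg _) (norm_nonneg _), ← hP.sum_norm_sq_apply,
    ← hP.sum_norm_sq_apply x]
  simp [hP.apply_sum_smul_apply, norm_smul, hc]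

theorem norm_sum_sum_mul_inner_le [Fintype κ] {Q : κ → E →L[𝕜] E} (hP : IsProjectiveMeasurement P)
    (hQ : IsProjectiveMeasurement Q) {l : ι → 𝕜} {u : κ → 𝕜} (hl : ∀ i, ‖l i‖ = 1)
    (hu : ∀ j, ‖u j‖ = 1) (x : E) :
    ‖∑ i, ∑ j, l i * u j * ⟪P i x, Q j x⟫‖ ≤ ‖x‖ ^ 2 := by
  have : ∑ i, ∑ j, l i * u j * ⟪P i x, Q j x⟫ =
      ⟪∑ i, (starRingEnd 𝕜) (l i) • P i x, ∑ j, u j • Q j x⟫ := by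
    simp only [sum_inner, inner_sum, inner_smul_left, inner_smul_right, RCLike.conj_conj, mul_sum]
    rw [sum_comm]
    exact sum_congr rfl fun i _ => sum_congr rfl fun j _ => by ring
  rw [this, sq]
  refine (norm_inner_le_norm _ _).trans_eq ?_
  rw [hP.norm_sum_smul_apply (by simpa using hl), hQ.norm_sum_smul_apply hu]

end IsProjectiveMeasurement

end ProjectiveMeasurement

theorem HasDerivAt.nonpos_of_isLocalMaxOn_Ici {g : ℝ → ℝ} {g' a : ℝ} (hg : HasDerivAt g g' a)
    (hmax : IsLocalMaxOn g (Ici a) a) : g' ≤ 0 := by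
  have h1 : (1 : ℝ) ∈ posTangentConeAt (Ici a) a :=
    mem_posTangentConeAt_of_segment_subset (by simp [segment_eq_Icc, Set.Icc_subset_Ici_self])
  simpa using hmax.hasFDerivWithinAt_nonpos hg.hasDerivWithinAt.hasFDerivWithinAt h1

section ExponentialSums

variable {ι κ : Type*} [Fintype ι] [Fintype κ]

theorem norm_sum_mul_exp_le (a : κ → ℂ) (θ : κ → ℝ) (z : ℂ) :
    ‖∑ k, a k * exp (z * θ k)‖ ≤ ∑ k, ‖a k‖ * Real.exp (z.re * θ k) :=
  (norm_sum_le _ _).trans_eq <| sum_congr rfl fun k _ => by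
    rw [norm_mul, norm_exp, re_mul_ofReal]

theorem sum_re_mul_nonpos_of_norm_sum_mul_exp_le_one (a : κ → ℂ) (θ : κ → ℝ)
    (hsum : ∑ k, a k = 1) (himag : ∀ z : ℂ, z.re = 0 → ‖∑ k, a k * exp (z * θ k)‖ ≤ 1)
    (hone : ∑ k, ‖a k‖ * Real.exp (θ k) ≤ 1) :
    ∑ k, (a k).re * θ k ≤ 0 := by
  set F : ℂ → ℂ := fun z => ∑ k, a k * exp (z * θ k) with hF
  have hbdd : BddAbove ((norm ∘ F) '' HadamardThreeLines.verticalClosedStrip 0 1) := by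
    refine ⟨∑ k, ‖a k‖ * Real.exp |θ k|, ?_⟩
    rintro _ ⟨z, ⟨hz0, hz1⟩, rfl⟩
    refine (norm_sum_mul_exp_le a θ z).trans (sum_le_sum fun k _ => ?_)
    gcongr
    calc z.re * θ k ≤ |z.re * θ k| := le_abs_self _
      _ ≤ |θ k| := by
        rw [abs_mul, abs_of_nonneg hz0]; exact mul_le_of_le_one_left (abs_nonneg _) hz1
  have hstrip : ∀ t ∈ Icc (0 : ℝ) 1, ‖F t‖ ≤ 1 := by
    intro t ht
    have := HadamardThreeLines.norm_le_interp_of_mem_verticalClosedStrip' (f := F) (z := t) (a := 1)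
      (b := 1) zero_lt_one (by simpa [HadamardThreeLines.verticalClosedStrip] using ht)
      (by fun_prop : Differentiable ℂ F).diffContOnCl hbdd himag fun z hz => ?_
    · simpa using this
    · refine (norm_sum_mul_exp_le a θ z).trans ?_
      simpa [show z.re = 1 from hz] using hone
  have hderiv : HasDerivAt F (∑ k, a k * θ k) (0 : ℝ) := by
    have := HasDerivAt.fun_sum (u := univ) fun k _ =>
      (((hasDerivAt_id (0 : ℂ)).mul_const (θ k : ℂ)).cexp).const_mul (a k)
    simpa using this
  have hre : HasDerivAt (fun t : ℝ => (F t).re) (∑ k, (a k).re * θ k) 0 := by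
    simpa using hderiv.real_of_complex
  refine hre.nonpos_of_isLocalMaxOn_Ici ?_
  filter_upwards [Icc_mem_nhdsGE zero_lt_one] with t ht
  simpa [hF, hsum] using (re_le_norm (F t)).trans (hstrip t ht)

theorem sum_mul_add_sum_mul_nonpos (a : ι → κ → ℂ) {p : ι → ℝ} {q : κ → ℝ}
    (hrow : ∀ i, ∑ j, a i j = p i) (hcol : ∀ j, ∑ i, a i j = q j) (hp : ∑ i, p i = 1)
    (hunit : ∀ (l : ι → ℂ) (u : κ → ℂ), (∀ i, ‖l i‖ = 1) → (∀ j, ‖u j‖ = 1) →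
      ‖∑ i, ∑ j, l i * u j * a i j‖ ≤ 1)
    (x : ι → ℝ) (y : κ → ℝ) (hone : ∑ i, ∑ j, ‖a i j‖ * Real.exp (x i + y j) ≤ 1) :
    ∑ i, p i * x i + ∑ j, q j * y j ≤ 0 := by
  have key := sum_re_mul_nonpos_of_norm_sum_mul_exp_le_one (fun ij : ι × κ => a ij.1 ij.2)
    (fun ij => x ij.1 + y ij.2) ?_ ?_ (by simpa [Fintype.sum_prod_type] using hone)
  · have hrow' : ∀ i, ∑ j, (a i j).re = p i := fun i => by simpa using congr_arg re (hrow i)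
    have hcol' : ∀ j, ∑ i, (a i j).re = q j := fun j => by simpa using congr_arg re (hcol j)
    simp only [Fintype.sum_prod_type, mul_add, sum_add_distrib] at key
    rw [sum_comm (f := fun i j => (a i j).re * y j)] at key
    simpa only [← sum_mul, hrow', hcol'] using key
  · rw [Fintype.sum_prod_type]
    simp [hrow, ← ofReal_sum, hp]
  · intro z hz
    have := hunit (fun i => exp (z * x i)) (fun j => exp (z * y j)) (by simp [norm_exp, hz])
      (by simp [norm_exp, hz])
    simpa [Fintype.sum_prod_type, mul_add, exp_add, mul_comm, mul_left_comm] using this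

theorem sum_mul_log_div_eq {p : ι → ℝ} (hp : ∑ i, p i = 1) {c : ℝ} (hc : c ≠ 0) :
    ∑ i, p i * Real.log (p i / c) = ∑ i, p i * Real.log (p i) - Real.log c := by
  rw [← one_mul (Real.log c), ← hp, sum_mul, ← sum_sub_distrib]
  refine sum_congr rfl fun i _ => ?_
  rcases eq_or_ne (p i) 0 with h | h
  · simp [h]
  · rw [Real.log_div h hc]; ring

theorem sum_mul_log_add_sum_mul_log_le (a : ι → κ → ℂ) {p : ι → ℝ} {q : κ → ℝ}
    (hp0 : ∀ i, 0 ≤ p i) (hq0 : ∀ j, 0 ≤ q j) (hp1 : ∑ i, p i = 1) (hq1 : ∑ j, q j = 1)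
    (hrow : ∀ i, ∑ j, a i j = p i) (hcol : ∀ j, ∑ i, a i j = q j)
    (hunit : ∀ (l : ι → ℂ) (u : κ → ℂ), (∀ i, ‖l i‖ = 1) → (∀ j, ‖u j‖ = 1) →
      ‖∑ i, ∑ j, l i * u j * a i j‖ ≤ 1)
    {c : ℝ} (hc : ∀ i j, ‖a i j‖ ≤ c * (√(p i) * √(q j))) :
    ∑ i, p i * Real.log (p i) + ∑ j, q j * Real.log (q j) ≤ 2 * Real.log c := by
  have hc0 : 0 < c := by
    obtain ⟨i, j, hij⟩ : ∃ i j, a i j ≠ 0 := by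
      by_contra! h
      have hsum : ∑ i, ∑ j, a i j = 1 := by simp [hrow, ← ofReal_sum, hp1]
      simp [h] at hsum
    exact pos_of_mul_pos_left ((norm_pos_iff.2 hij).trans_le (hc i j)) (by positivity)
  have hexp : ∀ t, 0 < t → Real.exp (Real.log (t / c) / 2) = √t / √c := fun t ht => by
    rw [Real.exp_half, Real.exp_log (div_pos ht hc0), Real.sqrt_div ht.le]
  have hterm : ∀ i j,
      ‖a i j‖ * Real.exp (Real.log (p i / c) / 2 + Real.log (q j / c) / 2) ≤ p i * q j := by
    intro i j
    rcases (hp0 i).eq_or_lt with hp | hp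
    · have : a i j = 0 := norm_le_zero_iff.1 (by simpa [← hp] using hc i j)
      simp [this, ← hp]
    rcases (hq0 j).eq_or_lt with hq | hq
    · have : a i j = 0 := norm_le_zero_iff.1 (by simpa [← hq] using hc i j)
      simp [this, ← hq]
    rw [Real.exp_add, hexp _ hp, hexp _ hq]
    calc ‖a i j‖ * (√(p i) / √c * (√(q j) / √c))
        ≤ c * (√(p i) * √(q j)) * (√(p i) / √c * (√(q j) / √c)) := by gcongr; exact hc i j
      _ = p i * q j := by
        field_simp
        rw [Real.sq_sqrt hc0.le, Real.sq_sqrt hp.le, Real.sq_sqrt hq.le]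
  -- At `p i = 0` the junk value `Real.log 0 = 0` is harmless: the row `a i` vanishes there.
  have key := sum_mul_add_sum_mul_nonpos a hrow hcol hp1 hunit
    (fun i => Real.log (p i / c) / 2) (fun j => Real.log (q j / c) / 2) <| by
      calc _ ≤ ∑ i, ∑ j, p i * q j := sum_le_sum fun i _ => sum_le_sum fun j _ => hterm i j
        _ = 1 := by rw [← sum_mul_sum, hp1, hq1, one_mul]
  simp only [mul_div_assoc', ← sum_div, sum_mul_log_div_eq hp1 hc0.ne',
    sum_mul_log_div_eq hq1 hc0.ne'] at key
  linarith

end ExponentialSums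

theorem entropic_uncertainty_opNorm
    {H : Type*} [NormedAddCommGroup H] [InnerProductSpace ℂ H] [FiniteDimensional ℂ H]
    {m n : ℕ} (P : Fin m → H →L[ℂ] H) (Q : Fin n → H →L[ℂ] H)
    (hPsa : ∀ i, IsSelfAdjoint (P i)) (hPidem : ∀ i, P i ∘L P i = P i)
    (hQsa : ∀ j, IsSelfAdjoint (Q j)) (hQidem : ∀ j, Q j ∘L Q j = Q j)
    (hPsum : ∑ i, P i = 1) (hQsum : ∑ j, Q j = 1)
    (ψ : H) (hψ : ‖ψ‖ = 1) :
    (-∑ i, (inner ℂ ψ (P i ψ) : ℂ).re * Real.logb 2 (inner ℂ ψ (P i ψ) : ℂ).re) +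
      (-∑ j, (inner ℂ ψ (Q j ψ) : ℂ).re * Real.logb 2 (inner ℂ ψ (Q j ψ) : ℂ).re) ≥
    -2 * Real.logb 2 (sSup {r : ℝ | ∃ i j, r = ‖P i ∘L Q j‖}) := by
  have hP : IsProjectiveMeasurement P := ⟨fun i => ⟨hPidem i, hPsa i⟩, hPsum⟩
  have hQ : IsProjectiveMeasurement Q := ⟨fun j => ⟨hQidem j, hQsa j⟩, hQsum⟩
  set c := sSup {r : ℝ | ∃ i j, r = ‖P i ∘L Q j‖}
  have hc : ∀ i j, ‖P i ∘L Q j‖ ≤ c := fun i j =>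
    le_csSup ((Set.finite_range fun ij : Fin m × Fin n => ‖P ij.1 ∘L Q ij.2‖).subset
      (by rintro _ ⟨i, j, rfl⟩; exact ⟨(i, j), rfl⟩)).bddAbove ⟨i, j, rfl⟩
  have key := sum_mul_log_add_sum_mul_log_le (fun i j => inner ℂ (P i ψ) (Q j ψ))
    (p := fun i => ‖P i ψ‖ ^ 2) (q := fun j => ‖Q j ψ‖ ^ 2)
    (fun _ => sq_nonneg _) (fun _ => sq_nonneg _)
    (by rw [hP.sum_norm_sq_apply, hψ, one_pow]) (by rw [hQ.sum_norm_sq_apply, hψ, one_pow])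
    (fun i => by rw [← inner_sum, hQ.sum_apply]; exact (hP.isStarProjection i).inner_apply_self ψ)
    (fun j => by rw [← sum_inner, hP.sum_apply]; exact (hQ.isStarProjection j).inner_self_apply ψ)
    (fun l u hl hu => by simpa [hψ] using hP.norm_sum_sum_mul_inner_le hQ hl hu ψ)
    (fun i j => by
      simp only [Real.sqrt_sq (norm_nonneg _)]
      exact ((hP.isStarProjection i).norm_inner_apply_le (hQ.isStarProjection j).isIdempotentElem
        ψ ψ).trans (by gcongr; exact hc i j))
  simp only [(hP.isStarProjection _).inner_self_apply, (hQ.isStarProjection _).inner_self_apply,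
    RCLike.ofReal_eq_complex_ofReal, ofReal_re, Real.logb, mul_div_assoc', ← sum_div, neg_mul,
    neg_div]
  have := div_le_div_of_nonneg_right key (Real.log_pos one_lt_two).le
  rw [add_div] at this
  linarith
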